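/- arXiv:1806.03722 — 7 statements merged into one kernel-verified Lean document; each statement's English description precedes it below -/
import Mathlib

section
/- The entries of any Markov triple are pairwise coprime: if a² + b² + c² = 3abc for positive integers a, b, c, then gcd(a, b) = gcd(b, c) = gcd(a, c) = 1. -/
/-!
Hurwitz descent: for `k ≥ 5` the equation `x² + y² + z² = k·x·y·z` has no solution in positive
integers, since replacing the largest entry `z` by the other root `k·x·y - z` of the quadratic in `z`
gives a smaller positive solution. A common divisor `g` of two entries of a Markov triple divides
the third, and dividing the triple by `g` gives a solution of the equation with `k = 3·g`, so `g = 1`.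
-/

namespace Markov

variable {k x y z : ℤ}

lemma vieta_jump_eq (h : x ^ 2 + y ^ 2 + z ^ 2 = k * x * y * z) :
    x ^ 2 + y ^ 2 + (k * x * y - z) ^ 2 = k * x * y * (k * x * y - z) := by
  linear_combination h

lemma mul_vieta_jump_eq (h : x ^ 2 + y ^ 2 + z ^ 2 = k * x * y * z) :
    z * (k * x * y - z) = x ^ 2 + y ^ 2 := by
  linear_combination -h

lemma vieta_jump_pos (hx : 0 < x) (hz : 0 < z) (h : x ^ 2 + y ^ 2 + z ^ 2 = k * x * y * z) :
    0 < k * x * y - z :=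
  pos_of_mul_pos_right (by rw [mul_vieta_jump_eq h]; positivity) hz.le

lemma vieta_jump_lt (hk : 5 ≤ k) (hx : 0 < x) (hy : 0 < y) (hxz : x ≤ z) (hyz : y ≤ z)
    (h : x ^ 2 + y ^ 2 + z ^ 2 = k * x * y * z) :
    k * x * y - z < z := by
  by_contra! hle
  have hz : 0 < z := hx.trans_le hxz
  have hz_sq : z ^ 2 ≤ x ^ 2 + y ^ 2 := by
    rw [← mul_vieta_jump_eq h, sq]; exact mul_le_mul_of_nonneg_left hle hz.le
  have hxy : 2 * (x + y) < k * x * y := by nlinarith [mul_pos hx hy]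
  nlinarith [mul_lt_mul_of_pos_right hxy hz]

theorem sq_add_sq_add_sq_ne_mul (hk : 5 ≤ k) (hx : 0 < x) (hy : 0 < y) (hz : 0 < z) :
    x ^ 2 + y ^ 2 + z ^ 2 ≠ k * x * y * z := by
  induction hn : (x + y + z).toNat using Nat.strong_induction_on generalizing x y z with
  | _ n ih => ?_
  have jump : ∀ {x y z : ℤ}, 0 < x → 0 < y → x ≤ z → y ≤ z → (x + y + z).toNat = n →
      x ^ 2 + y ^ 2 + z ^ 2 ≠ k * x * y * z := by
    intro x y z hx hy hxz hyz hn h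
    have hlt := vieta_jump_lt hk hx hy hxz hyz h
    exact ih _ (by omega) hx hy (vieta_jump_pos hx (hx.trans_le hxz) h) rfl (vieta_jump_eq h)
  intro h
  obtain ⟨hxz, hyz⟩ | ⟨hxy, hzy⟩ | ⟨hyx, hzx⟩ :
      (x ≤ z ∧ y ≤ z) ∨ (x ≤ y ∧ z ≤ y) ∨ (y ≤ x ∧ z ≤ x) := by omega
  · exact jump hx hy hxz hyz hn h
  · exact jump hx hz hxy hzy (by rw [← hn]; ring_nf) (by linear_combination h)
  · exact jump hy hz hyx hzx (by rw [← hn]; ring_nf) (by linear_combination h)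

lemma dvd_of_dvd_of_dvd {g : ℤ} (hgx : g ∣ x) (hgy : g ∣ y)
    (h : x ^ 2 + y ^ 2 + z ^ 2 = k * x * y * z) : g ∣ z := by
  have hz_sq : z ^ 2 = k * x * y * z - x ^ 2 - y ^ 2 := by linear_combination h
  rw [← Int.pow_dvd_pow_iff two_ne_zero, hz_sq]
  refine (Dvd.dvd.sub ?_ (pow_dvd_pow_of_dvd hgx 2)).sub (pow_dvd_pow_of_dvd hgy 2)
  rw [sq]
  exact dvd_mul_of_dvd_left (mul_dvd_mul (dvd_mul_of_dvd_right hgx k) hgy) z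

theorem gcd_eq_one_of_three_le (hk : 3 ≤ k) (hx : 0 < x) (hy : 0 < y) (hz : 0 < z)
    (h : x ^ 2 + y ^ 2 + z ^ 2 = k * x * y * z) : Int.gcd x y = 1 := by
  have hg_pos : 0 < Int.gcd x y := Int.gcd_pos_iff.mpr (.inl hx.ne')
  by_contra hg_ne
  set g : ℤ := ↑(Int.gcd x y)
  have hg_two : 2 ≤ g := by omega
  have hgx : g ∣ x := Int.gcd_dvd_left x y
  have hgy : g ∣ y := Int.gcd_dvd_right x y
  obtain ⟨z', rfl⟩ := dvd_of_dvd_of_dvd hgx hgy h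
  clear_value g
  obtain ⟨x', rfl⟩ := hgx
  obtain ⟨y', rfl⟩ := hgy
  have hg0 : 0 < g := by omega
  refine sq_add_sq_add_sq_ne_mul (k := k * g) (by nlinarith) (pos_of_mul_pos_right hx hg0.le)
    (pos_of_mul_pos_right hy hg0.le) (pos_of_mul_pos_right hz hg0.le) ?_
  refine mul_left_cancel₀ (pow_ne_zero 2 hg0.ne') ?_
  linear_combination h

end Markov

/-- The entries of any Markov triple are pairwise coprime (Frobenius). -/
theorem markov_pairwise_coprime (a b c : ℤ) (ha : 0 < a) (hb : 0 < b) (hc : 0 < c)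
    (h : a ^ 2 + b ^ 2 + c ^ 2 = 3 * a * b * c) :
    Int.gcd a b = 1 ∧ Int.gcd b c = 1 ∧ Int.gcd a c = 1 :=
  ⟨Markov.gcd_eq_one_of_three_le le_rfl ha hb hc h,
    Markov.gcd_eq_one_of_three_le le_rfl hb hc ha (by linear_combination h),
    Markov.gcd_eq_one_of_three_le le_rfl ha hc hb (by linear_combination h)⟩
end

section
/- There are infinitely many Markov triples; equivalently, the set of positive integer solutions (a, b, c) of a² + b² + c² = 3abc is infinite. -/
private def mseq : ℕ → ℤ × ℤ × ℤ
  | 0 => (1, 1, 1)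
  | n + 1 =>
    let p := mseq n
    (p.2.1, p.2.2, 3 * p.2.1 * p.2.2 - p.1)

private lemma mseq_inv (n : ℕ) :
    0 < (mseq n).1 ∧ (mseq n).1 ≤ (mseq n).2.1 ∧ (mseq n).2.1 ≤ (mseq n).2.2 ∧
      (mseq n).1 ^ 2 + (mseq n).2.1 ^ 2 + (mseq n).2.2 ^ 2 =
        3 * (mseq n).1 * (mseq n).2.1 * (mseq n).2.2 := by
  induction n with
  | zero => simp [mseq]
  | succ n ih =>
    obtain ⟨ha, hab, hbc, heq⟩ := ih
    set a := (mseq n).1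
    set b := (mseq n).2.1
    set c := (mseq n).2.2
    have hb : 0 < b := lt_of_lt_of_le ha hab
    have hc : 0 < c := lt_of_lt_of_le hb hbc
    simp only [mseq]
    refine ⟨hb, hbc, ?_, by nlinarith [heq]⟩
    nlinarith

private lemma mseq_strict (n : ℕ) : (mseq n).2.2 < (mseq (n + 1)).2.2 := by
  obtain ⟨ha, hab, hbc, _⟩ := mseq_inv n
  have hb : 0 < (mseq n).2.1 := lt_of_lt_of_le ha hab
  simp only [mseq]
  nlinarith

/-- There are infinitely many Markov triples. -/
theorem markov_triples_infinite :
    {p : ℤ × ℤ × ℤ | 0 < p.1 ∧ 0 < p.2.1 ∧ 0 < p.2.2 ∧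
      p.1 ^ 2 + p.2.1 ^ 2 + p.2.2 ^ 2 = 3 * p.1 * p.2.1 * p.2.2}.Infinite := by
  apply Set.infinite_of_injective_forall_mem (f := mseq)
  · have hmono : StrictMono (fun n => (mseq n).2.2) :=
      strictMono_nat_of_lt_succ mseq_strict
    intro m n h
    exact hmono.injective (by rw [h])
  · intro n
    obtain ⟨ha, hab, hbc, heq⟩ := mseq_inv n
    exact ⟨ha, lt_of_lt_of_le ha hab, lt_of_lt_of_le (lt_of_lt_of_le ha hab) hbc, heq⟩
end

section
/- Every Markov triple can be obtained from (1, 1, 1) by a finite sequence of mutations in the three coordinates: if a² + b² + c² = 3abc with a, b, c positive integers, then (a, b, c) is reachable from (1, 1, 1) by finitely many applications of the maps (a,b,c) ↦ (3bc−a, b, c), (a,b,c) ↦ (a, 3ac−b, c), (a,b,c) ↦ (a, b, 3ab−c). -/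
/-- One step of mutation of a triple in one of the three coordinates. -/
def markovMutation (p q : ℤ × ℤ × ℤ) : Prop :=
  q = (3 * p.2.1 * p.2.2 - p.1, p.2.1, p.2.2) ∨
  q = (p.1, 3 * p.1 * p.2.2 - p.2.1, p.2.2) ∨
  q = (p.1, p.2.1, 3 * p.1 * p.2.1 - p.2.2)

lemma markov_core (a b c : ℤ) (ha : 0 < a) (hab : a ≤ b) (hbc : b ≤ c)
    (hc2 : 2 ≤ c) (h : a ^ 2 + b ^ 2 + c ^ 2 = 3 * a * b * c) :
    0 < 3 * a * b - c ∧ 3 * a * b - c < c := by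
  have hb : 0 < b := lt_of_lt_of_le ha hab
  have hc : 0 < c := lt_of_lt_of_le hb hbc
  have hpos : 0 < 3 * a * b - c := by
    by_contra hx
    push_neg at hx
    nlinarith [mul_nonpos_of_nonneg_of_nonpos hc.le hx, sq_nonneg a, sq_nonneg b]
  refine ⟨hpos, ?_⟩
  rcases eq_or_lt_of_le hbc with rfl | hlt
  · exfalso
    nlinarith [mul_pos ha hb, sq_nonneg (a - b), mul_le_mul_of_nonneg_right hab hb.le]
  · by_contra hx
    push_neg at hx
    have h1 : 0 < c - b := by linarith
    have h2 : 0 < 3 * a * b - c - b := by linarith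
    nlinarith [mul_pos h1 h2, mul_le_mul_of_nonneg_right hab ha.le,
      mul_le_mul_of_nonneg_right hab hb.le, sq_nonneg (b - a)]

/-- unsorted version: x, y both ≤ z -/
lemma markov_descent_s3 (x y z : ℤ) (hx : 0 < x) (hy : 0 < y) (hxz : x ≤ z) (hyz : y ≤ z)
    (hz2 : 2 ≤ z) (h : x ^ 2 + y ^ 2 + z ^ 2 = 3 * x * y * z) :
    0 < 3 * x * y - z ∧ 3 * x * y - z < z := by
  rcases le_total x y with hxy | hxy
  · exact markov_core x y z hx hxy hyz hz2 h
  · obtain ⟨h1, h2⟩ := markov_core y x z hy hxy hxz hz2 (by linarith)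
    rw [show 3 * x * y = 3 * y * x by ring]
    exact ⟨h1, h2⟩

lemma markov_aux : ∀ n : ℕ, ∀ a b c : ℤ, 0 < a → 0 < b → 0 < c →
    a ^ 2 + b ^ 2 + c ^ 2 = 3 * a * b * c → a + b + c ≤ (n : ℤ) →
    Relation.ReflTransGen markovMutation (1, 1, 1) (a, b, c) := by
  intro n
  induction n with
  | zero => intro a b c ha hb hc h hs; exfalso; push_cast at hs; linarith
  | succ n ih =>
    intro a b c ha hb hc h hs
    by_cases hone : a = 1 ∧ b = 1 ∧ c = 1
    · obtain ⟨rfl, rfl, rfl⟩ := hone; exact Relation.ReflTransGen.refl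
    · -- the max coordinate is ≥ 2
      have hmax2 : 2 ≤ a ∨ 2 ≤ b ∨ 2 ≤ c := by
        by_contra hx
        push_neg at hx
        exact hone ⟨by omega, by omega, by omega⟩
      -- figure out which coordinate is max; it is ≥ 2 automatically
      rcases le_total a b with hab | hab
      · rcases le_total b c with hbc | hbc
        · -- c is max
          have hc2 : 2 ≤ c := by omega
          obtain ⟨hd1, hd2⟩ := markov_descent_s3 a b c ha hb (hab.trans hbc) hbc hc2 h
          have hm : a ^ 2 + b ^ 2 + (3 * a * b - c) ^ 2 = 3 * a * b * (3 * a * b - c) := by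
            ring_nf; ring_nf at h; linarith
          have := ih a b (3 * a * b - c) ha hb hd1 hm (by push_cast at hs ⊢; linarith)
          refine this.tail ?_
          right; right; simp only []; ring_nf
        · -- b is max
          have hb2 : 2 ≤ b := by omega
          obtain ⟨hd1, hd2⟩ := markov_descent_s3 a c b ha hc hab hbc hb2 (by linarith)
          have hm : a ^ 2 + (3 * a * c - b) ^ 2 + c ^ 2 = 3 * a * (3 * a * c - b) * c := by
            ring_nf; ring_nf at h; linarith
          have := ih a (3 * a * c - b) c ha hd1 hc hm (by push_cast at hs ⊢; linarith)
          refine this.tail ?_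
          right; left; simp only []; ring_nf
      · rcases le_total a c with hac | hac
        · -- c is max
          have hc2 : 2 ≤ c := by omega
          obtain ⟨hd1, hd2⟩ := markov_descent_s3 a b c ha hb hac (hab.trans hac) hc2 h
          have hm : a ^ 2 + b ^ 2 + (3 * a * b - c) ^ 2 = 3 * a * b * (3 * a * b - c) := by
            ring_nf; ring_nf at h; linarith
          have := ih a b (3 * a * b - c) ha hb hd1 hm (by push_cast at hs ⊢; linarith)
          refine this.tail ?_
          right; right; simp only []; ring_nf
        · -- a is max
          have ha2 : 2 ≤ a := by omega
          obtain ⟨hd1, hd2⟩ := markov_descent_s3 b c a hb hc hab hac ha2 (by linarith)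
          have hm : (3 * b * c - a) ^ 2 + b ^ 2 + c ^ 2 = 3 * (3 * b * c - a) * b * c := by
            ring_nf; ring_nf at h; linarith
          have := ih (3 * b * c - a) b c hd1 hb hc hm (by push_cast at hs ⊢; linarith)
          refine this.tail ?_
          left; simp only []; ring_nf

/-- Every Markov triple is reachable from (1,1,1) by finitely many mutations. -/
theorem markov_tree (a b c : ℤ) (ha : 0 < a) (hb : 0 < b) (hc : 0 < c)
    (h : a ^ 2 + b ^ 2 + c ^ 2 = 3 * a * b * c) :
    Relation.ReflTransGen markovMutation (1, 1, 1) (a, b, c) := by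
  exact markov_aux (a + b + c).toNat a b c ha hb hc h (by omega)
end

section
/- Let (a, b, c) be a Markov triple with a ≤ b ≤ c and (a, b, c) not a permutation of (1, 1, 1) or (1, 1, 2). Then the mutation in the largest coordinate strictly decreases it: 0 < 3ab − c < c. -/
/-- Descent lemma: mutation in the largest coordinate strictly decreases it,
except for the triples (1,1,1) and (1,1,2). -/
theorem markov_descent (a b c : ℤ) (ha : 0 < a) (hb : 0 < b) (hc : 0 < c)
    (hab : a ≤ b) (hbc : b ≤ c)
    (h : a ^ 2 + b ^ 2 + c ^ 2 = 3 * a * b * c)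
    (h1 : (a, b, c) ≠ (1, 1, 1)) (h2 : (a, b, c) ≠ (1, 1, 2)) :
    0 < 3 * a * b - c ∧ 3 * a * b - c < c := by
  have key : (3 * a * b - c) * c = a ^ 2 + b ^ 2 := by nlinarith [h]
  constructor
  · by_contra hneg
    push_neg at hneg
    nlinarith [mul_pos ha hb, sq_nonneg a, sq_nonneg b, mul_nonneg (neg_nonneg.2 hneg) hc.le]
  · by_contra hge
    push_neg at hge
    have hc2 : c ^ 2 ≤ a ^ 2 + b ^ 2 := by nlinarith
    have ha1 : a = 1 := by
      nlinarith [mul_pos hb hc, mul_le_mul_of_nonneg_left hbc hb.le,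
        mul_le_mul_of_nonneg_right hab hc.le]
    subst ha1
    have hcb : c = b := by nlinarith
    subst hcb
    have hc1 : c = 1 := by nlinarith [sq_nonneg (c - 1)]
    exact h1 (by simp [hc1])
end

section
/- Let (a, b, c) be a Markov triple and m a positive integer such that (a² + b²)·m = c² and (a² + b²)·(m + 1) = 3abc. Then c = m and 3ab − c = 1. -/
/-- The equation x²+y²+z² = Nxyz has no positive solutions when N ≥ 6
(Vieta jumping / descent on x+y+z, sorted case). -/
lemma markov_aux_no_sol (N : ℤ) (hN : 6 ≤ N) :
    ∀ s : ℕ, ∀ x y z : ℤ, 0 < x → 0 < y → 0 < z →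
      x ^ 2 + y ^ 2 + z ^ 2 = N * x * y * z → (x + y + z).toNat ≤ s → False := by
  intro s
  induction s with
  | zero =>
    intro x y z hx hy hz _ hs
    omega
  | succ n ih =>
    have key : ∀ x y z : ℤ, 0 < x → 0 < y → 0 < z → x ≤ z → y ≤ z →
        x ^ 2 + y ^ 2 + z ^ 2 = N * x * y * z → (x + y + z).toNat ≤ n + 1 → False := by
      intro x y z hx hy hz hxz hyz heq hs
      set z' := N * x * y - z with hz'def
      have hvz : z * z' = x ^ 2 + y ^ 2 := by
        rw [hz'def]; nlinarith [heq]
      have hz'pos : 0 < z' := by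
        nlinarith [sq_nonneg x, sq_nonneg y]
      rcases lt_or_ge z' z with hlt | hle
      · have hsum : z + z' = N * x * y := by rw [hz'def]; ring
        have heq' : x ^ 2 + y ^ 2 + z' ^ 2 = N * x * y * z' := by
          nlinarith [hvz, hsum]
        have hlt' : x + y + z' < x + y + z := by linarith
        exact ih x y z' hx hy hz'pos heq' (by omega)
      · have h1 : z ^ 2 ≤ x ^ 2 + y ^ 2 := by nlinarith [hvz]
        have hx2 : (1 : ℤ) ≤ x ^ 2 := by nlinarith
        have hy2 : (1 : ℤ) ≤ y ^ 2 := by nlinarith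
        have hxy2 : x ^ 2 + y ^ 2 ≤ 2 * x ^ 2 * y ^ 2 := by
          nlinarith [mul_nonneg (sq_nonneg x) (sub_nonneg.2 hy2),
            mul_nonneg (sq_nonneg y) (sub_nonneg.2 hx2)]
        have h2xy : 2 * x * y ≤ z := by
          nlinarith [mul_pos hx hy, mul_pos (mul_pos hx hy) hz]
        nlinarith [mul_pos hx hy]
    intro x y z hx hy hz heq hs
    rcases le_total x z with hxz | hxz
    · rcases le_total y z with hyz | hyz
      · exact key x y z hx hy hz hxz hyz heq hs
      · -- z ≤ y, x ≤ z ≤ y : max is y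
        exact key x z y hx hz hy (le_trans hxz hyz) hyz
          (by linear_combination heq) (by omega)
    · -- z ≤ x
      rcases le_total y x with hyx | hyx
      · -- max is x
        exact key y z x hy hz hx hyx hxz
          (by linear_combination heq) (by omega)
      · -- x ≤ y, z ≤ x ≤ y : max is y
        exact key x z y hx hz hy hyx (le_trans hxz hyx)
          (by linear_combination heq) (by omega)

/-- A Markov triple has no common divisor d ≥ 2. -/
lemma markov_no_common_div (a b c d : ℤ) (ha : 0 < a) (hb : 0 < b) (hc : 0 < c)
    (hd : 2 ≤ d) (hda : d ∣ a) (hdb : d ∣ b) (hdc : d ∣ c)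
    (h : a ^ 2 + b ^ 2 + c ^ 2 = 3 * a * b * c) : False := by
  obtain ⟨x, rfl⟩ := hda
  obtain ⟨y, rfl⟩ := hdb
  obtain ⟨z, rfl⟩ := hdc
  have hdpos : (0 : ℤ) < d := by omega
  have hx : 0 < x := by
    rcases lt_trichotomy x 0 with h' | h' | h'
    · nlinarith
    · simp [h'] at ha
    · exact h'
  have hy : 0 < y := by
    rcases lt_trichotomy y 0 with h' | h' | h'
    · nlinarith
    · simp [h'] at hb
    · exact h'
  have hz : 0 < z := by
    rcases lt_trichotomy z 0 with h' | h' | h'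
    · nlinarith
    · simp [h'] at hc
    · exact h'
  have heq : x ^ 2 + y ^ 2 + z ^ 2 = (3 * d) * x * y * z := by
    have hd2 : d ^ 2 ≠ 0 := by positivity
    have : d ^ 2 * (x ^ 2 + y ^ 2 + z ^ 2) = d ^ 2 * ((3 * d) * x * y * z) := by
      linear_combination h
    exact mul_left_cancel₀ hd2 this
  exact markov_aux_no_sol (3 * d) (by omega) (x + y + z).toNat x y z hx hy hz heq le_rfl

/-- If 3 divides a²+b² then 3 divides a and b. -/
lemma three_dvd_of_dvd_sq_add_sq (a b : ℤ) (h : (3 : ℤ) ∣ a ^ 2 + b ^ 2) :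
    (3 : ℤ) ∣ a ∧ (3 : ℤ) ∣ b := by
  have key : ∀ x y : ZMod 3, x ^ 2 + y ^ 2 = 0 → x = 0 ∧ y = 0 := by decide
  have h' : ((a : ZMod 3)) ^ 2 + ((b : ZMod 3)) ^ 2 = 0 := by
    have := (ZMod.intCast_zmod_eq_zero_iff_dvd (a ^ 2 + b ^ 2) 3).mpr (by exact_mod_cast h)
    push_cast at this
    linear_combination this
  obtain ⟨ha, hb⟩ := key _ _ h'
  constructor
  · exact_mod_cast (ZMod.intCast_zmod_eq_zero_iff_dvd a 3).mp ha
  · exact_mod_cast (ZMod.intCast_zmod_eq_zero_iff_dvd b 3).mp hb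

/-- If (a,b,c) is a Markov triple and m ≥ 1 satisfies (a²+b²)m = c² and
(a²+b²)(m+1) = 3abc, then c = m and 3ab − c = 1. -/
theorem markov_vertex_lemma (a b c m : ℤ) (ha : 0 < a) (hb : 0 < b) (hc : 0 < c)
    (hm : 0 < m)
    (h : a ^ 2 + b ^ 2 + c ^ 2 = 3 * a * b * c)
    (h1 : (a ^ 2 + b ^ 2) * m = c ^ 2)
    (h2 : (a ^ 2 + b ^ 2) * (m + 1) = 3 * a * b * c) :
    c = m ∧ 3 * a * b - c = 1 := by
  set k := 3 * a * b - c with hkdef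
  have hk : a ^ 2 + b ^ 2 = c * k := by rw [hkdef]; linear_combination h
  have hkpos : 0 < k := by nlinarith [sq_nonneg a, sq_nonneg b]
  -- c = k * m
  have hcm : c = k * m := by
    have : c * (k * m) = c * c := by linear_combination h1 - m * hk
    have := mul_left_cancel₀ hc.ne' this
    omega
  -- k * (m + 1) = 3 * a * b
  have hk3 : k * (m + 1) = 3 * a * b := by
    have : c * (k * (m + 1)) = c * (3 * a * b) := by
      linear_combination h2 - (m + 1) * hk
    exact mul_left_cancel₀ hc.ne' this
  -- show k = 1
  have hk1 : k = 1 := by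
    by_contra hne
    have hk2 : 2 ≤ k := by omega
    -- get a prime factor of k
    obtain ⟨p, hp, hpk'⟩ := Nat.exists_prime_and_dvd (n := k.toNat) (by omega)
    have hpk : (p : ℤ) ∣ k := by
      have : (p : ℤ) ∣ (k.toNat : ℤ) := Int.natCast_dvd_natCast.mpr hpk'
      rwa [Int.toNat_of_nonneg (by omega)] at this
    have hpc : (p : ℤ) ∣ c := hcm ▸ hpk.mul_right m
    have hppZ : Prime (p : ℤ) := Nat.prime_iff_prime_int.mp hp
    have hpab : (p : ℤ) ∣ a ∧ (p : ℤ) ∣ b := by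
      by_cases hp3 : p = 3
      · subst hp3
        have h3ab : (3 : ℤ) ∣ a ^ 2 + b ^ 2 := by
          rw [hk]
          exact_mod_cast Dvd.dvd.mul_right hpc k
        exact three_dvd_of_dvd_sq_add_sq a b h3ab
      · have hpab' : (p : ℤ) ∣ 3 * (a * b) := by
          have : (p : ℤ) ∣ k * (m + 1) := hpk.mul_right _
          rw [hk3] at this
          convert this using 1; ring
        have hnp3 : ¬ (p : ℤ) ∣ 3 := by
          intro hd
          have h3 : p ∣ 3 := by exact_mod_cast hd
          exact hp3 ((Nat.prime_dvd_prime_iff_eq hp Nat.prime_three).mp h3)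
        have hab : (p : ℤ) ∣ a * b := (hppZ.dvd_mul.mp hpab').resolve_left hnp3
        rcases hppZ.dvd_mul.mp hab with hpa | hpb
        · refine ⟨hpa, ?_⟩
          have : (p : ℤ) ∣ b ^ 2 := by
            have hb2 : b ^ 2 = 3 * a * b * c - a ^ 2 - c ^ 2 := by linear_combination h
            rw [hb2]
            exact dvd_sub (dvd_sub (((hpa.mul_left 3).mul_right b).mul_right c)
              (dvd_pow hpa two_ne_zero)) (dvd_pow hpc two_ne_zero)
          exact hppZ.dvd_of_dvd_pow this
        · refine ⟨?_, hpb⟩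
          have : (p : ℤ) ∣ a ^ 2 := by
            have ha2 : a ^ 2 = 3 * a * b * c - b ^ 2 - c ^ 2 := by linear_combination h
            rw [ha2]
            exact dvd_sub (dvd_sub ((hpb.mul_left (3 * a)).mul_right c)
              (dvd_pow hpb two_ne_zero)) (dvd_pow hpc two_ne_zero)
          exact hppZ.dvd_of_dvd_pow this
    exact markov_no_common_div a b c p ha hb hc (by exact_mod_cast hp.two_le)
      hpab.1 hpab.2 hpc h
  refine ⟨?_, hk1⟩
  rw [hcm, hk1, one_mul]
end

section
/- The localization of A = ℂ[p, q, t^{±1}]/(pq − (1 − t)) at the element p is isomorphic as a ℂ-algebra to the Laurent polynomial ring ℂ[x^{±1}, y^{±1}], via p ↦ x, q ↦ (1 + y)x^{-1}, t ↦ −y. -/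
noncomputable section

open MvPolynomial

/-- The relations defining A = ℂ[p,q,t,t⁻¹]/(pq − (1 − t)): the variables are
p = X 0, q = X 1, t = X 2, s = X 3 (s playing the role of t⁻¹). -/
def ARel : Ideal (MvPolynomial (Fin 4) ℂ) :=
  Ideal.span {X 0 * X 1 - (1 - X 2), X 2 * X 3 - 1}

/-- The ring A = ℂ[p,q,t,t⁻¹]/(pq − (1 − t)). -/
abbrev ARing := MvPolynomial (Fin 4) ℂ ⧸ ARel

/-- The generator p of A. -/
def pA : ARing := Ideal.Quotient.mk ARel (X 0)
/-- The generator q of A. -/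
def qA : ARing := Ideal.Quotient.mk ARel (X 1)
/-- The generator t of A. -/
def tA : ARing := Ideal.Quotient.mk ARel (X 2)
/-- The generator t⁻¹ of A. -/
def sA : ARing := Ideal.Quotient.mk ARel (X 3)

/-- The Laurent polynomial ring ℂ[x^{±1}, y^{±1}]. -/
abbrev LaurentTwo := AddMonoidAlgebra ℂ (ℤ × ℤ)

/-- The monomial x. -/
def xL : LaurentTwo := AddMonoidAlgebra.single (1, 0) 1
/-- The monomial x⁻¹. -/
def xLinv : LaurentTwo := AddMonoidAlgebra.single (-1, 0) 1
/-- The monomial y. -/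
def yL : LaurentTwo := AddMonoidAlgebra.single (0, 1) 1

/-!
Once p is inverted, the relation pq = 1 − t expresses q as (1 − t)p⁻¹, and t is already a unit, so
A[p⁻¹] should be the Laurent ring on the two units p and −t. Accordingly, x ↦ p, y ↦ −t defines a
map from ℂ[x^{±1}, y^{±1}] to A[p⁻¹], and p ↦ x, q ↦ (1 + y)x⁻¹, t ↦ −y (which respects
pq = 1 − t and sends p to a unit) defines a map back; the two maps are mutually inverse because
they are on generators.
-/

open AddMonoidAlgebra

namespace AddMonoidAlgebra

variable {k A : Type*} [CommSemiring k]

theorem algHom_ext_int_prod [Semiring A] [Algebra k A] {f g : AddMonoidAlgebra k (ℤ × ℤ) →ₐ[k] A}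
    (hx : f (single (1, 0) 1) = g (single (1, 0) 1))
    (hy : f (single (0, 1) 1) = g (single (0, 1) 1)) : f = g := by
  have hfst : ((lift k A _).symm f).comp (AddMonoidHom.inl ℤ ℤ).toMultiplicative =
      ((lift k A _).symm g).comp (AddMonoidHom.inl ℤ ℤ).toMultiplicative :=
    MonoidHom.ext_mint (by simpa using hx)
  have hsnd : ((lift k A _).symm f).comp (AddMonoidHom.inr ℤ ℤ).toMultiplicative =
      ((lift k A _).symm g).comp (AddMonoidHom.inr ℤ ℤ).toMultiplicative :=
    MonoidHom.ext_mint (by simpa using hy)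
  refine algHom_ext (fun ⟨m, n⟩ => ?_) (Subsingleton.elim _ _)
  have hm : f (single (m, 0) 1) = g (single (m, 0) 1) := DFunLike.congr_fun hfst (.ofAdd m)
  have hn : f (single (0, n) 1) = g (single (0, n) 1) := DFunLike.congr_fun hsnd (.ofAdd n)
  rw [← add_zero m, ← zero_add n, ← Prod.mk_add_mk, ← one_mul (1 : k), ← single_mul_single,
    map_mul, map_mul, hm, hn]

theorem single_mul_single_neg {G : Type*} [AddGroup G] (a : G) :
    single a (1 : k) * single (-a) 1 = 1 := by
  rw [single_mul_single, add_neg_cancel, mul_one, one_def]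

variable [CommSemiring A] [Algebra k A]

def liftUnitsPair (u v : Aˣ) : AddMonoidAlgebra k (ℤ × ℤ) →ₐ[k] A :=
  lift k A _ <| (Units.coeHom A).comp
    { toFun := fun a => u ^ a.toAdd.1 * v ^ a.toAdd.2
      map_one' := by simp
      map_mul' := fun a b => by
        simp only [toAdd_mul, Prod.fst_add, Prod.snd_add, zpow_add]
        exact mul_mul_mul_comm _ _ _ _ }

theorem liftUnitsPair_single (u v : Aˣ) (m n : ℤ) :
    liftUnitsPair (k := k) u v (single (m, n) 1) = ↑(u ^ m * v ^ n) := by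
  simp [liftUnitsPair]

end AddMonoidAlgebra

theorem xL_mul_xLinv : xL * xLinv = 1 := single_mul_single_neg (1, 0)

namespace ARing

theorem pA_mul_qA : pA * qA = 1 - tA := by
  rw [pA, qA, tA, ← map_mul, ← map_one (Ideal.Quotient.mk ARel), ← map_sub,
    Ideal.Quotient.mk_eq_mk_iff_sub_mem]
  exact Ideal.subset_span (by simp)

theorem tA_mul_sA : tA * sA = 1 := by
  rw [tA, sA, ← map_mul, ← map_one (Ideal.Quotient.mk ARel), Ideal.Quotient.mk_eq_mk_iff_sub_mem]
  exact Ideal.subset_span (by simp)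

variable {R : Type*}

section lift

variable [CommRing R] [Algebra ℂ R] {P Q T S : R}

def lift (hPQ : P * Q = 1 - T) (hTS : T * S = 1) : ARing →ₐ[ℂ] R :=
  Ideal.Quotient.liftₐ ARel (aeval ![P, Q, T, S]) fun a ha => by
    refine (Ideal.span_le (I := RingHom.ker (aeval ![P, Q, T, S])).2 ?_ ha :)
    rintro r (rfl | rfl) <;> simp [hPQ, hTS]

variable (hPQ : P * Q = 1 - T) (hTS : T * S = 1)

theorem lift_pA : lift hPQ hTS pA = P := aeval_X _ 0
theorem lift_qA : lift hPQ hTS qA = Q := aeval_X _ 1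
theorem lift_tA : lift hPQ hTS tA = T := aeval_X _ 2

end lift

theorem algHom_ext [Semiring R] [Algebra ℂ R] {f g : ARing →ₐ[ℂ] R}
    (hp : f pA = g pA) (hq : f qA = g qA) (ht : f tA = g tA) : f = g := by
  have hs : f sA = g sA := calc
    f sA = f sA * (g tA * g sA) := by rw [← map_mul, tA_mul_sA, map_one, mul_one]
    _ = g sA := by rw [← ht, ← mul_assoc, ← map_mul, mul_comm, tA_mul_sA, map_one, one_mul]
  refine Ideal.Quotient.algHom_ext _ (MvPolynomial.algHom_ext fun i => ?_)
  fin_cases i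
  exacts [hp, hq, ht, hs]

local notation "Aₚ" => Localization.Away pA

def toLaurent : ARing →ₐ[ℂ] LaurentTwo :=
  lift (P := xL) (Q := (1 + yL) * xLinv) (T := -yL) (S := -single (0, -1) 1)
    (by rw [mul_left_comm, xL_mul_xLinv, mul_one, sub_neg_eq_add, add_comm])
    (by rw [neg_mul_neg]; exact single_mul_single_neg (0, 1))

theorem toLaurent_pA : toLaurent pA = xL := lift_pA ..
theorem toLaurent_qA : toLaurent qA = (1 + yL) * xLinv := lift_qA ..
theorem toLaurent_tA : toLaurent tA = -yL := lift_tA ..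

def awayToLaurent : Aₚ →ₐ[ℂ] LaurentTwo :=
  IsLocalization.liftAlgHom (M := Submonoid.powers pA) (f := toLaurent) <| by
    rintro ⟨_, n, rfl⟩
    simpa [toLaurent_pA] using (IsUnit.of_mul_eq_one _ xL_mul_xLinv).pow n

theorem awayToLaurent_algebraMap (a : ARing) :
    awayToLaurent (algebraMap ARing Aₚ a) = toLaurent a :=
  IsLocalization.lift_eq _ _

theorem isUnit_neg_algebraMap_tA : IsUnit (-algebraMap ARing Aₚ tA) :=
  IsUnit.of_mul_eq_one (-algebraMap ARing Aₚ sA) <| by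
    rw [neg_mul_neg, ← map_mul, tA_mul_sA, map_one]

def laurentToAway : LaurentTwo →ₐ[ℂ] Aₚ :=
  liftUnitsPair (IsLocalization.Away.algebraMap_isUnit pA).unit isUnit_neg_algebraMap_tA.unit

theorem laurentToAway_xL : laurentToAway xL = algebraMap ARing Aₚ pA := by
  simp [laurentToAway, xL, liftUnitsPair_single]

theorem laurentToAway_yL : laurentToAway yL = -algebraMap ARing Aₚ tA := by
  simp [laurentToAway, yL, liftUnitsPair_single]

theorem awayToLaurent_comp_laurentToAway : awayToLaurent.comp laurentToAway = .id ℂ _ :=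
  algHom_ext_int_prod
    (show awayToLaurent (laurentToAway xL) = xL by
      rw [laurentToAway_xL, awayToLaurent_algebraMap, toLaurent_pA])
    (show awayToLaurent (laurentToAway yL) = yL by
      rw [laurentToAway_yL, map_neg, awayToLaurent_algebraMap, toLaurent_tA, neg_neg])

theorem laurentToAway_comp_awayToLaurent : laurentToAway.comp awayToLaurent = .id ℂ _ := by
  refine Localization.algHom_ext _ (algHom_ext ?_ ?_ ?_)
  · show laurentToAway (awayToLaurent (algebraMap ARing Aₚ pA)) = algebraMap ARing Aₚ pA
    rw [awayToLaurent_algebraMap, toLaurent_pA, laurentToAway_xL]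
  · show laurentToAway (awayToLaurent (algebraMap ARing Aₚ qA)) = algebraMap ARing Aₚ qA
    rw [awayToLaurent_algebraMap, toLaurent_qA]
    calc laurentToAway ((1 + yL) * xLinv)
        = algebraMap ARing Aₚ (pA * qA) * laurentToAway xLinv := by
          rw [map_mul, map_add, map_one, laurentToAway_yL, ← sub_eq_add_neg, pA_mul_qA, map_sub,
            map_one]
      _ = algebraMap ARing Aₚ qA * laurentToAway (xL * xLinv) := by
          rw [map_mul, map_mul, laurentToAway_xL]; ring
      _ = algebraMap ARing Aₚ qA := by rw [xL_mul_xLinv, map_one, mul_one]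
  · show laurentToAway (awayToLaurent (algebraMap ARing Aₚ tA)) = algebraMap ARing Aₚ tA
    rw [awayToLaurent_algebraMap, toLaurent_tA, map_neg, laurentToAway_yL, neg_neg]

end ARing

/-- The localization of A = ℂ[p,q,t^{±1}]/(pq − (1−t)) at the element p is isomorphic
as a ℂ-algebra to ℂ[x^{±1}, y^{±1}], via p ↦ x, q ↦ (1+y)x⁻¹, t ↦ −y. -/
theorem localization_at_p_iso :
    ∃ e : Localization.Away pA ≃ₐ[ℂ] LaurentTwo,
      e (algebraMap ARing (Localization.Away pA) pA) = xL ∧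
      e (algebraMap ARing (Localization.Away pA) qA) = (1 + yL) * xLinv ∧
      e (algebraMap ARing (Localization.Away pA) tA) = -yL := by
  refine ⟨.ofAlgHom _ _ ARing.awayToLaurent_comp_laurentToAway
    ARing.laurentToAway_comp_awayToLaurent, ?_, ?_, ?_⟩ <;>
  simp only [AlgEquiv.ofAlgHom_apply, ARing.awayToLaurent_algebraMap]
  exacts [ARing.toLaurent_pA, ARing.toLaurent_qA, ARing.toLaurent_tA]
end
end

section
/- Let φ: ℂ[p, q, t^{±1}]/(pq − (1−t)) → ℂ[x^{±1}, y^{±1}] be the algebra homomorphism with φ(p) = x, φ(q) = (1+y)x^{-1}, φ(t) = −y. If F lies in the image of φ and F = Σ_{k ∈ ℤ} x^k·F_k(y) is its expansion with F_k ∈ ℂ[y^{±1}], then for every k ≥ 1 the coefficient F_{−k}(y) is divisible by (1 + y)^k in ℂ[y^{±1}]. -/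
noncomputable section

open MvPolynomial

/-- The coefficient F_k ∈ ℂ[y^{±1}] in the expansion F = Σ_k x^k F_k(y) of a Laurent
polynomial F ∈ ℂ[x^{±1}, y^{±1}]. -/
def sliceX (F : LaurentTwo) (k : ℤ) : AddMonoidAlgebra ℂ ℤ :=
  AddMonoidAlgebra.ofCoeff (Finsupp.comapDomain (fun j : ℤ => (k, j)) F.coeff
    (Function.Injective.injOn (fun a b h => by simpa using h)))


/-! Regroup `ℂ[x^{±1}, y^{±1}]` as Laurent polynomials in `x` over `ℂ[y^{±1}]`. Those whose
`x^{-k}`-coefficient is divisible by `(1 + y)^k` for every `k` form a subalgebra, because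
`k ↦ max(-k, 0)` is subadditive. The images of the generators `p = x`, `q = (1 + y) x⁻¹`,
`t = -y`, `t⁻¹ = -y⁻¹` are single monomials in `x` lying in it, hence so is the whole image
of `φ`. -/

namespace AddMonoidAlgebra

variable (S : Type*) {R : Type*} [CommSemiring S] [CommSemiring R] [Algebra S R]

def negCoeffDvdSubalgebra (d : R) : Subalgebra S (AddMonoidAlgebra R ℤ) where
  carrier := {f | ∀ k : ℤ, d ^ (-k).toNat ∣ f.coeff k}
  add_mem' hf hg k := by
    rw [coeff_add, Finsupp.add_apply]
    exact dvd_add (hf k) (hg k)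
  mul_mem' {f g} hf hg k := by
    classical
    rw [coeff_mul]
    refine Finset.dvd_sum fun i _ => Finset.dvd_sum fun j _ => ?_
    dsimp only
    split_ifs with hij
    · calc d ^ (-k).toNat ∣ d ^ ((-i).toNat + (-j).toNat) := pow_dvd_pow _ (by omega)
        _ = d ^ (-i).toNat * d ^ (-j).toNat := pow_add _ _ _
        _ ∣ f.coeff i * g.coeff j := mul_dvd_mul (hf i) (hg j)
    · exact dvd_zero _
  algebraMap_mem' c k := by
    classical
    rw [coe_algebraMap, Function.comp_apply, coeff_single, Finsupp.single_apply]
    split_ifs with hk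
    · simp [← hk]
    · exact dvd_zero _

variable {S}

theorem single_mem_negCoeffDvdSubalgebra {d : R} {i : ℤ} {a : R} (h : d ^ (-i).toNat ∣ a) :
    single i a ∈ negCoeffDvdSubalgebra S d := by
  intro k
  classical
  rw [coeff_single, Finsupp.single_apply]
  split_ifs with hik
  · rwa [← hik]
  · exact dvd_zero _

end AddMonoidAlgebra

open AddMonoidAlgebra

theorem sliceX_eq_coeff_curryAlgEquiv (F : LaurentTwo) (k : ℤ) :
    sliceX F k = (curryAlgEquiv ℂ F).coeff k := by
  ext j
  simp [sliceX, curryAlgEquiv, curryRingEquiv, curryAddEquiv]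

theorem tA_mul_sA : tA * sA = 1 := by
  rw [tA, sA, ← map_mul, ← map_one (Ideal.Quotient.mk ARel), Ideal.Quotient.eq]
  exact Ideal.subset_span (Set.mem_insert_of_mem _ rfl)

theorem ARing.range_le_of_generators_mem {A : Type*} [CommSemiring A] [Algebra ℂ A]
    (f : ARing →ₐ[ℂ] A) (T : Subalgebra ℂ A)
    (hp : f pA ∈ T) (hq : f qA ∈ T) (ht : f tA ∈ T) (hs : f sA ∈ T) : f.range ≤ T := by
  rintro _ ⟨a, rfl⟩
  obtain ⟨P, rfl⟩ := Ideal.Quotient.mkₐ_surjective ℂ ARel a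
  have : (f.comp (Ideal.Quotient.mkₐ ℂ ARel)).range ≤ T := by
    rw [aeval_unique (f.comp _), aeval_range]
    refine Algebra.adjoin_le ?_
    rintro _ ⟨i, rfl⟩
    fin_cases i <;> assumption
  exact this ⟨P, rfl⟩

theorem image_divisibility_general (φ : ARing →ₐ[ℂ] LaurentTwo)
    (hp : φ pA = xL) (hq : φ qA = (1 + yL) * xLinv) (ht : φ tA = -yL)
    (F : LaurentTwo) (hF : F ∈ Set.range φ) (k : ℕ) :
    (1 + AddMonoidAlgebra.single (1 : ℤ) (1 : ℂ)) ^ k ∣ sliceX F (-(k : ℤ)) := by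
  have hs : φ sA = single (0, -1) (-1) := by
    refine left_inv_eq_right_inv (a := φ tA) ?_ ?_
    · rw [mul_comm, ← map_mul, tA_mul_sA, map_one]
    · rw [ht, yL, neg_mul, single_mul_single]
      simp [AddMonoidAlgebra.one_def, Prod.mk_zero_zero]
  let ψ := (curryAlgEquiv ℂ : LaurentTwo ≃ₐ[ℂ] _).toAlgHom.comp φ
  have hrange : ψ.range ≤ negCoeffDvdSubalgebra ℂ (1 + single (1 : ℤ) (1 : ℂ)) := by
    refine ARing.range_le_of_generators_mem ψ _ ?_ ?_ ?_ ?_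
    · rw [show ψ pA = single 1 (single 0 1) by simp [ψ, hp, xL]]
      exact single_mem_negCoeffDvdSubalgebra (by simp)
    · rw [show ψ qA = single (-1) (1 + single 1 1) by
        simp only [ψ, AlgHom.comp_apply, hq, yL, xLinv, add_mul, AddMonoidAlgebra.one_def,
          single_mul_single, map_add, single_add]
        norm_num]
      exact single_mem_negCoeffDvdSubalgebra (by simp)
    · rw [show ψ tA = single 0 (single 1 (-1)) by simp [ψ, ht, yL]]
      exact single_mem_negCoeffDvdSubalgebra (by simp)
    · rw [show ψ sA = single 0 (single (-1) (-1)) by simp [ψ, hs]]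
      exact single_mem_negCoeffDvdSubalgebra (by simp)
  obtain ⟨a, rfl⟩ := hF
  have h := hrange ⟨a, rfl⟩ (-k)
  rw [neg_neg, Int.toNat_natCast] at h
  rwa [sliceX_eq_coeff_curryAlgEquiv]

/-- If F is in the image of the surgery homomorphism φ (φ(p) = x, φ(q) = (1+y)x⁻¹,
φ(t) = −y), then in the expansion F = Σ_k x^k F_k(y) the coefficient F_{−k} is
divisible by (1 + y)^k for every k ≥ 1. -/
theorem image_divisibility (φ : ARing →ₐ[ℂ] LaurentTwo)
    (hp : φ pA = xL) (hq : φ qA = (1 + yL) * xLinv) (ht : φ tA = -yL)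
    (F : LaurentTwo) (hF : F ∈ Set.range φ) (k : ℕ) (hk : 1 ≤ k) :
    (1 + AddMonoidAlgebra.single (1 : ℤ) (1 : ℂ)) ^ k ∣ sliceX F (-(k : ℤ)) :=
  image_divisibility_general φ hp hq ht F hF k
end
end
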